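/- Let I = [0,1] with Lebesgue measure, x_i^{(n)} = i/n, and let P(x,y) = (1−α)·y^{−α} for some α ∈ [0, 1/2). Then s_n := sup_i ∑_{k=1}^n ∫_{(k−1)/n}^{k/n} |P(x_i, k/n) − P(x_i, y)| dy = (1−α)·(∫_0^1 y^{−α} dy − n^{−(1−α)}·∑_{k=1}^n k^{−α}) = O(n^{−(1−α)}), and in particular s_n → 0 as n → ∞. -/

import Mathlib

/-!
On the `k`-th cell `((k - 1)/n, k/n]` the function `y ↦ y ^ (-α)` is antitone, so the absolute
value can be dropped and every cell integral is explicit. The sum telescopes to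
`1 - (1 - α) n ^ (-(1 - α)) ∑ k ^ (-α)`, and comparing `∑_{k ≤ n} k ^ (-α)` with
`∫_1^{n+1} y ^ (-α) dy` bounds this by `n ^ (-(1 - α))`.
-/

open Asymptotics Filter Finset MeasureTheory

theorem Finset.sum_Icc_sub_natCast_sub_one (f : ℝ → ℝ) (n : ℕ) :
    ∑ k ∈ Icc 1 n, (f k - f ((k : ℝ) - 1)) = f n - f 0 := by
  induction n with
  | zero => simp
  | succ m ih =>
    rw [sum_Icc_succ_top (Nat.le_add_left 1 m), ih]
    push_cast [add_sub_cancel_right]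
    ring

section PowerLaw

variable {α : ℝ}

theorem integral_Ioc_rpow_neg (hα : α < 1) {a b : ℝ} (hab : a ≤ b) :
    ∫ y in Set.Ioc a b, y ^ (-α) = (b ^ (1 - α) - a ^ (1 - α)) / (1 - α) := by
  rw [← intervalIntegral.integral_of_le hab, integral_rpow (Or.inl (by linarith))]
  ring_nf

theorem setIntegral_abs_rpow_neg_sub (hα0 : 0 ≤ α) (hα1 : α < 1) {a b : ℝ} (ha : 0 ≤ a)
    (hab : a ≤ b) :
    ∫ y in Set.Ioc a b, |(1 - α) * b ^ (-α) - (1 - α) * y ^ (-α)|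
      = b ^ (1 - α) - a ^ (1 - α) - (1 - α) * b ^ (-α) * (b - a) := by
  have h_abs : ∀ y ∈ Set.Ioc a b, |(1 - α) * b ^ (-α) - (1 - α) * y ^ (-α)|
      = (1 - α) * y ^ (-α) - (1 - α) * b ^ (-α) := by
    intro y hy
    have : b ^ (-α) ≤ y ^ (-α) :=
      Real.rpow_le_rpow_of_nonpos (ha.trans_lt hy.1) hy.2 (by linarith)
    rw [abs_sub_comm]
    exact abs_of_nonneg (sub_nonneg.2 (mul_le_mul_of_nonneg_left this (by linarith)))
  have h_int : IntegrableOn (fun y : ℝ ↦ y ^ (-α)) (Set.Ioc a b) :=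
    (intervalIntegral.intervalIntegrable_rpow' (by linarith)).1
  rw [setIntegral_congr_fun measurableSet_Ioc h_abs,
    integral_sub (h_int.const_mul _) (integrableOn_const measure_Ioc_lt_top.ne),
    integral_const_mul, integral_Ioc_rpow_neg hα1 hab, setIntegral_const,
    Real.volume_real_Ioc_of_le hab, smul_eq_mul]
  field_simp [show 1 - α ≠ 0 by linarith]

theorem sub_one_le_mul_sum_rpow_neg (hα0 : 0 ≤ α) (hα1 : α < 1) (n : ℕ) :
    ((n : ℝ) + 1) ^ (1 - α) - 1 ≤ (1 - α) * ∑ k ∈ Icc 1 n, (k : ℝ) ^ (-α) := by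
  have h_anti : AntitoneOn (fun y : ℝ ↦ y ^ (-α)) (Set.Icc (1 : ℕ) (n + 1 : ℕ)) :=
    fun x hx y _ hxy ↦ Real.rpow_le_rpow_of_nonpos (by simp at hx; linarith) hxy (by linarith)
  have h_cmp := h_anti.integral_le_sum_Ico (by omega)
  rw [Finset.Ico_add_one_right_eq_Icc, integral_rpow (Or.inl (by linarith))] at h_cmp
  push_cast at h_cmp
  rw [Real.one_rpow, neg_add_eq_sub, div_le_iff₀ (by linarith)] at h_cmp
  linarith

/-- The quantity `s_n`; the position `x_i` does not enter since `P` ignores it. -/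
noncomputable def powerLawDiscretizationError (α : ℝ) (n : ℕ) : ℝ :=
  ∑ k ∈ Icc 1 n, ∫ y in Set.Ioc (((k : ℝ) - 1) / n) ((k : ℝ) / n),
    |(1 - α) * ((k : ℝ) / n) ^ (-α) - (1 - α) * y ^ (-α)|

theorem powerLawDiscretizationError_nonneg (n : ℕ) : 0 ≤ powerLawDiscretizationError α n :=
  sum_nonneg fun _ _ ↦ setIntegral_nonneg measurableSet_Ioc fun _ _ ↦ abs_nonneg _

theorem powerLawDiscretizationError_eq (hα0 : 0 ≤ α) (hα1 : α < 1) {n : ℕ} (hn : 1 ≤ n) :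
    powerLawDiscretizationError α n
      = 1 - (1 - α) * (n : ℝ) ^ (-(1 - α)) * ∑ k ∈ Icc 1 n, (k : ℝ) ^ (-α) := by
  have hn0 : (0 : ℝ) < n := by exact_mod_cast hn
  have h_cell : ∀ k ∈ Icc 1 n,
      ∫ y in Set.Ioc (((k : ℝ) - 1) / n) ((k : ℝ) / n),
          |(1 - α) * ((k : ℝ) / n) ^ (-α) - (1 - α) * y ^ (-α)|
        = (((k : ℝ) / n) ^ (1 - α) - (((k : ℝ) - 1) / n) ^ (1 - α))
          - (1 - α) * (n : ℝ) ^ (-(1 - α)) * (k : ℝ) ^ (-α) := by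
    intro k hk
    have hk1 : (1 : ℝ) ≤ k := by exact_mod_cast (mem_Icc.mp hk).1
    have h_scale : ((k : ℝ) / n) ^ (-α) * ((k : ℝ) / n - ((k : ℝ) - 1) / n)
        = (n : ℝ) ^ (-(1 - α)) * (k : ℝ) ^ (-α) := by
      rw [Real.div_rpow (by linarith) hn0.le, neg_sub, Real.rpow_sub_one hn0.ne',
        Real.rpow_neg hn0.le]
      field_simp
      ring
    rw [setIntegral_abs_rpow_neg_sub hα0 hα1 (by positivity) (by gcongr; linarith), mul_assoc,
      h_scale]
    ring
  have h_tel := sum_Icc_sub_natCast_sub_one (fun x ↦ (x / n) ^ (1 - α)) n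
  rw [powerLawDiscretizationError, sum_congr rfl h_cell, sum_sub_distrib, h_tel, ← mul_sum,
    div_self hn0.ne', zero_div, Real.one_rpow, Real.zero_rpow (by linarith)]
  ring

theorem powerLawDiscretizationError_le (hα0 : 0 ≤ α) (hα1 : α < 1) (n : ℕ) :
    powerLawDiscretizationError α n ≤ (n : ℝ) ^ (-(1 - α)) := by
  rcases Nat.eq_zero_or_pos n with rfl | hn
  · simpa [powerLawDiscretizationError] using Real.rpow_nonneg le_rfl (α - 1)
  have hn0 : (0 : ℝ) < n := by exact_mod_cast hn
  have h_sum : (n : ℝ) ^ (1 - α) - 1 ≤ (1 - α) * ∑ k ∈ Icc 1 n, (k : ℝ) ^ (-α) :=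
    le_trans (by gcongr; linarith) (sub_one_le_mul_sum_rpow_neg hα0 hα1 n)
  have h_inv : (n : ℝ) ^ (-(1 - α)) * (n : ℝ) ^ (1 - α) = 1 := by
    rw [← Real.rpow_add hn0, neg_add_cancel, Real.rpow_zero]
  rw [powerLawDiscretizationError_eq hα0 hα1 hn]
  nlinarith [mul_le_mul_of_nonneg_left h_sum (Real.rpow_nonneg hn0.le (-(1 - α)))]

end PowerLaw

/-- For P(x,y) = (1−α)y^{−α} with α ∈ [0,1/2) and regular positions x_k = k/n on [0,1]:
s_n = sup_i ∑_k ∫_{(k−1)/n}^{k/n} |P(x_i,k/n) − P(x_i,y)| dy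
    = (1−α)(∫_0^1 y^{−α}dy − n^{−(1−α)}∑_{k=1}^n k^{−α}) = O(n^{−(1−α)}) → 0. -/
theorem power_law_kernel_discretization (α : ℝ) (hα0 : 0 ≤ α) (hα : α < 1 / 2) :
    (∀ n : ℕ, 1 ≤ n → ∀ i ∈ Finset.Icc 1 n,
      ∑ k ∈ Finset.Icc 1 n, ∫ y in Set.Ioc (((k : ℝ) - 1) / n) ((k : ℝ) / n),
          |(1 - α) * ((k : ℝ) / n) ^ (-α) - (1 - α) * y ^ (-α)|
        = (1 - α) * ((∫ y in Set.Ioc (0 : ℝ) 1, y ^ (-α)) -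
            (n : ℝ) ^ (-(1 - α)) * ∑ k ∈ Finset.Icc 1 n, (k : ℝ) ^ (-α))) ∧
    (fun n : ℕ => ∑ k ∈ Finset.Icc 1 n, ∫ y in Set.Ioc (((k : ℝ) - 1) / n) ((k : ℝ) / n),
        |(1 - α) * ((k : ℝ) / n) ^ (-α) - (1 - α) * y ^ (-α)|)
      =O[Filter.atTop] (fun n : ℕ => (n : ℝ) ^ (-(1 - α))) ∧
    Filter.Tendsto
      (fun n : ℕ => ∑ k ∈ Finset.Icc 1 n, ∫ y in Set.Ioc (((k : ℝ) - 1) / n) ((k : ℝ) / n),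
        |(1 - α) * ((k : ℝ) / n) ^ (-α) - (1 - α) * y ^ (-α)|)
      Filter.atTop (nhds 0) := by
  have hα1 : α < 1 := by linarith
  have h_le := powerLawDiscretizationError_le hα0 hα1
  refine ⟨fun n hn _ _ ↦ ?_, ?_, ?_⟩
  · change powerLawDiscretizationError α n = _
    rw [powerLawDiscretizationError_eq hα0 hα1 hn, integral_Ioc_rpow_neg hα1 zero_le_one,
      Real.one_rpow, Real.zero_rpow (by linarith)]
    field_simp [show 1 - α ≠ 0 by linarith]
    ring
  · change powerLawDiscretizationError α =O[atTop] _
    refine isBigO_of_le _ fun n ↦ ?_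
    rw [Real.norm_of_nonneg (powerLawDiscretizationError_nonneg n),
      Real.norm_of_nonneg (by positivity)]
    exact h_le n
  · exact squeeze_zero powerLawDiscretizationError_nonneg h_le
      ((tendsto_rpow_neg_atTop (by linarith)).comp tendsto_natCast_atTop_atTop)
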